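/- arXiv:2508.07906 — 2 statements merged into one kernel-verified Lean document; each statement's English description precedes it below -/
import Mathlib

section
/- The Euler–Mascheroni constant γ satisfies 1 − γ = ∫_0^1 (1 − e^{−u} − u) u^{−2} du + ∫_1^∞ (1 − e^{−u}) u^{−2} du. -/
/-!
Differentiating Euler's integral for `Γ` at `1` gives `-γ = Γ'(1) = ∫₀^∞ e^{-u} log u du`.
On `(1, ∞)` the function `F u = (e^{-u} - 1) / u + e^{-u} log u` is an antiderivative of
`(1 - e^{-u}) / u² - e^{-u} log u` vanishing at infinity, and on `(0, 1)` the function `F - log`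
is an antiderivative of `(1 - e^{-u} - u) / u² - e^{-u} log u` tending to `-1` at `0`.
Hence the two integrals of the statement exceed those of `e^{-u} log u` over the same ranges by
`1 - e^{-1}` and `e^{-1}`, and their sum is `1 - γ`.
-/

open Real MeasureTheory Set Filter Topology

theorem Real.hasDerivAt_Gamma_eq_integral {s : ℝ} (hs : 0 < s) :
    HasDerivAt Gamma (∫ t in Ioi 0, t ^ (s - 1) * (log t * exp (-t))) s := by
  have hC := Complex.hasDerivAt_GammaIntegral (s := s) (by simpa using hs)
  have hint : ∫ t : ℝ in Ioi 0, (t : ℂ) ^ ((s : ℂ) - 1) * (log t * exp (-t))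
      = ((∫ t in Ioi 0, t ^ (s - 1) * (log t * exp (-t)) : ℝ) : ℂ) := by
    refine .trans ?_ integral_ofReal
    refine setIntegral_congr_fun measurableSet_Ioi fun t ht => ?_
    simp [Complex.ofReal_cpow (le_of_lt ht)]
  rw [hint] at hC
  have hΓ : Complex.GammaIntegral =ᶠ[𝓝 (s : ℂ)] Complex.Gamma := by
    filter_upwards [Complex.continuous_re.isOpen_preimage _ isOpen_Ioi |>.mem_nhds
      (by simpa using hs)] with z hz using (Complex.Gamma_eq_integral hz).symm
  exact (hC.congr_of_eventuallyEq hΓ.symm).real_of_complex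

theorem integral_Ioi_exp_neg_mul_log :
    ∫ t in Ioi 0, exp (-t) * log t = -eulerMascheroniConstant := by
  have h := Real.hasDerivAt_Gamma_eq_integral one_pos
  simp only [sub_self, rpow_zero, one_mul, mul_comm (log _)] at h
  exact h.unique hasDerivAt_Gamma_one

theorem integrableOn_exp_neg_mul_log :
    IntegrableOn (fun t => exp (-t) * log t) (Ioi 0) := by
  rw [← Ioc_union_Ioi_eq_Ioi zero_le_one]
  refine IntegrableOn.union ?_ ?_
  · have hlog : IntegrableOn log (Icc 0 1) :=
      (intervalIntegrable_iff_integrableOn_Icc_of_le zero_le_one).mp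
        intervalIntegral.intervalIntegrable_log'
    exact (hlog.continuousOn_mul (by fun_prop) isCompact_Icc).mono_set Ioc_subset_Icc_self
  · -- `log t ≤ t` makes the integrand of `Γ(2)` a dominating function
    refine (GammaIntegral_convergent two_pos).mono_set (Ioi_subset_Ioi zero_le_one) |>.mono' ?_ ?_
    · exact ContinuousOn.aestronglyMeasurable
        (by fun_prop (disch := intro t ht; exact (zero_lt_one.trans ht).ne')) measurableSet_Ioi
    · filter_upwards [ae_restrict_mem measurableSet_Ioi] with t (ht : 1 < t)
      rw [norm_mul, norm_of_nonneg (exp_pos _).le, norm_of_nonneg (log_nonneg ht.le),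
        show (2 : ℝ) - 1 = 1 by norm_num, rpow_one]
      exact mul_le_mul_of_nonneg_left ((log_le_sub_one_of_pos (by linarith)).trans (by linarith))
        (exp_pos _).le

theorem integrableOn_one_sub_exp_neg_sub_div_sq :
    IntegrableOn (fun u => (1 - exp (-u) - u) / u ^ 2) (Ioc 0 1) := by
  refine (integrableOn_const (C := (1 : ℝ)) measure_Ioc_lt_top.ne).mono' ?_ ?_
  · exact ContinuousOn.aestronglyMeasurable
      (.div (by fun_prop) (by fun_prop) fun u hu => pow_ne_zero 2 hu.1.ne') measurableSet_Ioc
  · filter_upwards [ae_restrict_mem measurableSet_Ioc] with u ⟨hu0, hu1⟩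
    have hquad : |exp (-u) - 1 - -u| ≤ (-u) ^ 2 :=
      abs_exp_sub_one_sub_id_le (by rwa [abs_neg, abs_of_pos hu0])
    rw [norm_div, norm_pow, norm_of_nonneg hu0.le, div_le_one (by positivity), norm_eq_abs,
      show 1 - exp (-u) - u = -(exp (-u) - 1 - -u) by ring, abs_neg, ← neg_sq]
    exact hquad

theorem integrableOn_one_sub_exp_neg_div_sq :
    IntegrableOn (fun u => (1 - exp (-u)) / u ^ 2) (Ioi 1) := by
  refine (integrableOn_Ioi_rpow_of_lt (by norm_num : (-2 : ℝ) < -1) one_pos).mono' ?_ ?_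
  · exact ContinuousOn.aestronglyMeasurable
      (.div (by fun_prop) (by fun_prop) fun u hu => pow_ne_zero 2 (zero_lt_one.trans hu).ne')
      measurableSet_Ioi
  · filter_upwards [ae_restrict_mem measurableSet_Ioi] with u (hu : 1 < u)
    have hexp : exp (-u) ≤ 1 := exp_le_one_iff.mpr (by linarith)
    rw [norm_div, norm_pow, norm_of_nonneg (by linarith : 0 ≤ 1 - exp (-u)),
      norm_of_nonneg (by linarith), rpow_neg (by linarith), rpow_two, div_eq_mul_inv]
    exact mul_le_of_le_one_left (by positivity) (by linarith [exp_pos (-u)])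

theorem hasDerivAt_exp_neg_sub_one_div_add_exp_neg_mul_log {u : ℝ} (hu : 0 < u) :
    HasDerivAt (fun u => (exp (-u) - 1) / u + exp (-u) * log u)
      ((1 - exp (-u)) / u ^ 2 - exp (-u) * log u) u := by
  have hexp : HasDerivAt (fun u => exp (-u)) (-exp (-u)) u := by
    simpa using (hasDerivAt_neg u).exp
  refine (((hexp.sub_const 1).div (hasDerivAt_id' u) hu.ne').add
    (hexp.mul (hasDerivAt_log hu.ne'))).congr_deriv ?_
  field_simp
  ring

theorem tendsto_exp_neg_sub_one_div_add_exp_neg_mul_log_atTop :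
    Tendsto (fun u => (exp (-u) - 1) / u + exp (-u) * log u) atTop (𝓝 0) := by
  have hfrac : Tendsto (fun u => (exp (-u) - 1) / u) atTop (𝓝 0) := by
    simpa using (tendsto_exp_neg_atTop_nhds_zero.sub_const 1).div_atTop tendsto_id
  have hlog : Tendsto (fun u => exp (-u) * log u) atTop (𝓝 0) := by
    refine squeeze_zero' ?_ ?_ (by simpa using tendsto_pow_mul_exp_neg_atTop_nhds_zero 1)
    · filter_upwards [eventually_ge_atTop 1] with u hu
      exact mul_nonneg (exp_pos _).le (log_nonneg hu)
    · filter_upwards [eventually_gt_atTop 0] with u hu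
      rw [mul_comm]
      exact mul_le_mul_of_nonneg_right ((log_le_sub_one_of_pos hu).trans (by linarith))
        (exp_pos _).le
  simpa using hfrac.add hlog

theorem tendsto_exp_neg_sub_one_div_nhdsGT_zero :
    Tendsto (fun u => (exp (-u) - 1) / u) (𝓝[>] 0) (𝓝 (-1)) := by
  have h : HasDerivAt (fun u => exp (-u)) (-1) 0 := by
    simpa using (hasDerivAt_neg (0 : ℝ)).exp
  simpa [div_eq_inv_mul] using h.tendsto_slope_zero_right

theorem integral_Ioi_one_sub_exp_neg_div_sq :
    ∫ u in Ioi 1, (1 - exp (-u)) / u ^ 2 = (1 - exp (-1)) + ∫ u in Ioi 1, exp (-u) * log u := by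
  have hLog := integrableOn_exp_neg_mul_log.mono_set (Ioi_subset_Ioi zero_le_one)
  refine eq_add_of_sub_eq ?_
  rw [← integral_sub integrableOn_one_sub_exp_neg_div_sq hLog,
    integral_Ioi_of_hasDerivAt_of_tendsto'
      (fun u hu => hasDerivAt_exp_neg_sub_one_div_add_exp_neg_mul_log (zero_lt_one.trans_le hu))
      (integrableOn_one_sub_exp_neg_div_sq.sub hLog)
      tendsto_exp_neg_sub_one_div_add_exp_neg_mul_log_atTop]
  simp

theorem integral_Ioc_one_sub_exp_neg_sub_div_sq :
    ∫ u in Ioc 0 1, (1 - exp (-u) - u) / u ^ 2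
      = exp (-1) + ∫ u in Ioc 0 1, exp (-u) * log u := by
  have hLog : IntegrableOn (fun u => exp (-u) * log u) (Ioc 0 1) :=
    integrableOn_exp_neg_mul_log.mono_set Ioc_subset_Ioi_self
  have hderiv {u : ℝ} (hu : 0 < u) :
      HasDerivAt (fun u => (exp (-u) - 1) / u + exp (-u) * log u - log u)
        ((1 - exp (-u) - u) / u ^ 2 - exp (-u) * log u) u :=
    ((hasDerivAt_exp_neg_sub_one_div_add_exp_neg_mul_log hu).sub
      (hasDerivAt_log hu.ne')).congr_deriv (by field_simp; ring)
  -- `(e^{-u} - 1) log u = ((e^{-u} - 1) / u) (u log u)` and `u log u → 0`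
  have hzero : Tendsto (fun u => (exp (-u) - 1) / u + exp (-u) * log u - log u)
      (𝓝[>] 0) (𝓝 (-1)) := by
    have hlim : Tendsto (fun u => (exp (-u) - 1) / u + (exp (-u) - 1) / u * (log u * u))
        (𝓝[>] 0) (𝓝 (-1)) := by
      simpa using tendsto_exp_neg_sub_one_div_nhdsGT_zero.add
        (tendsto_exp_neg_sub_one_div_nhdsGT_zero.mul (tendsto_log_mul_rpow_nhdsGT_zero one_pos))
    refine hlim.congr' ?_
    filter_upwards [self_mem_nhdsWithin] with u (hu : 0 < u)
    field_simp
    ring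
  refine eq_add_of_sub_eq ?_
  rw [← integral_sub integrableOn_one_sub_exp_neg_sub_div_sq hLog,
    ← intervalIntegral.integral_of_le zero_le_one,
    intervalIntegral.integral_eq_sub_of_hasDerivAt_of_tendsto zero_lt_one (fun u hu => hderiv hu.1)
      ((intervalIntegrable_iff_integrableOn_Ioc_of_le zero_le_one).mpr
        (integrableOn_one_sub_exp_neg_sub_div_sq.sub hLog)) hzero
      ((hderiv one_pos).continuousAt.tendsto.mono_left nhdsWithin_le_nhds)]
  simp

theorem one_sub_eulerMascheroni_integral :
    1 - Real.eulerMascheroniConstant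
      = (∫ u in Set.Ioo (0 : ℝ) 1, (1 - exp (-u) - u) / u ^ 2)
        + ∫ u in Set.Ioi (1 : ℝ), (1 - exp (-u)) / u ^ 2 := by
  have hsplit : ∫ u in Ioi 0, exp (-u) * log u
      = (∫ u in Ioc 0 1, exp (-u) * log u) + ∫ u in Ioi 1, exp (-u) * log u := by
    rw [← Ioc_union_Ioi_eq_Ioi zero_le_one, setIntegral_union (Ioc_disjoint_Ioi le_rfl)
      measurableSet_Ioi (integrableOn_exp_neg_mul_log.mono_set Ioc_subset_Ioi_self)
      (integrableOn_exp_neg_mul_log.mono_set (Ioi_subset_Ioi zero_le_one))]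
  rw [← integral_Ioc_eq_integral_Ioo, integral_Ioc_one_sub_exp_neg_sub_div_sq,
    integral_Ioi_one_sub_exp_neg_div_sq]
  linarith [integral_Ioi_exp_neg_mul_log]
end

section
/- For all x > 0, the digamma function satisfies log x − 1/x ≤ Ψ(x) ≤ log x − 1/(2x). -/
open Real

/-- The digamma function `Ψ = Γ'/Γ`. -/
noncomputable def digamma (x : ℝ) : ℝ := deriv Real.Gamma x / Real.Gamma x

/-!
Since `log Γ` is convex on `(0, ∞)` (Bohr–Mollerup) and `log Γ (x + 1) = log Γ x + log x`, its
slope over `[x, x + 1]` is `log x`, which therefore lies between `Ψ x` and `Ψ (x + 1) = Ψ x + 1 / x`.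
This gives the lower bound. For the upper bound, the trapezoid estimate
`log (y + 1) - log y ≤ 1 / (2 y) + 1 / (2 (y + 1))` makes `log y - 1 / (2 y) - Ψ y` decrease along
`x, x + 1, x + 2, …`, while `Ψ ≤ log` bounds it below by `-1 / (2 y) → 0`.
-/

open Filter

namespace Real

lemma log_le_half_sub_inv {t : ℝ} (ht : 1 ≤ t) : log t ≤ (t - t⁻¹) / 2 := by
  rw [← sinh_log (by linarith)]
  exact self_le_sinh_iff.mpr (log_nonneg ht)

lemma log_add_one_sub_log_le {y : ℝ} (hy : 0 < y) :
    log (y + 1) - log y ≤ 1 / (2 * y) + 1 / (2 * (y + 1)) := by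
  have h := log_le_half_sub_inv (t := (y + 1) / y) (by rw [le_div_iff₀ hy]; linarith)
  rw [log_div (by positivity) hy.ne'] at h
  convert h using 2
  field_simp
  ring

lemma differentiableAt_Gamma_of_pos {x : ℝ} (hx : 0 < x) : DifferentiableAt ℝ Gamma x :=
  differentiableAt_Gamma fun m ↦ by linarith [(m.cast_nonneg : (0 : ℝ) ≤ m)]

lemma differentiableAt_log_Gamma {x : ℝ} (hx : 0 < x) : DifferentiableAt ℝ (log ∘ Gamma) x :=
  (differentiableAt_Gamma_of_pos hx).log (Gamma_pos_of_pos hx).ne'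

lemma deriv_log_Gamma {x : ℝ} (hx : 0 < x) : deriv (log ∘ Gamma) x = digamma x := by
  rw [Function.comp_def, deriv.log (differentiableAt_Gamma_of_pos hx) (Gamma_pos_of_pos hx).ne',
    digamma]

lemma log_Gamma_add_one {x : ℝ} (hx : 0 < x) :
    log (Gamma (x + 1)) = log (Gamma x) + log x := by
  rw [Gamma_add_one hx.ne', log_mul hx.ne' (Gamma_pos_of_pos hx).ne', add_comm]

lemma slope_log_Gamma_add_one {x : ℝ} (hx : 0 < x) : slope (log ∘ Gamma) x (x + 1) = log x := by
  rw [slope_def_field, Function.comp_apply, Function.comp_apply, log_Gamma_add_one hx]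
  ring

lemma digamma_add_one {x : ℝ} (hx : 0 < x) : digamma (x + 1) = digamma x + 1 / x := by
  rw [← deriv_log_Gamma hx, ← deriv_log_Gamma (by linarith), ← deriv_comp_add_const, one_div,
    ← deriv_log, ← deriv_add (differentiableAt_log_Gamma hx) (differentiableAt_log hx.ne')]
  apply EventuallyEq.deriv_eq
  filter_upwards [eventually_gt_nhds hx] with y hy using log_Gamma_add_one hy

lemma digamma_le_log {x : ℝ} (hx : 0 < x) : digamma x ≤ log x := by
  rw [← deriv_log_Gamma hx, ← slope_log_Gamma_add_one hx]
  exact convexOn_log_Gamma.deriv_le_slope hx (show 0 < x + 1 by linarith) (by linarith)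
    (differentiableAt_log_Gamma hx)

lemma log_le_digamma_add_one {x : ℝ} (hx : 0 < x) : log x ≤ digamma (x + 1) := by
  have hx1 : 0 < x + 1 := by linarith
  rw [← deriv_log_Gamma hx1, ← slope_log_Gamma_add_one hx]
  exact convexOn_log_Gamma.slope_le_deriv hx hx1 (by linarith) (differentiableAt_log_Gamma hx1)

lemma log_sub_inv_le_digamma {x : ℝ} (hx : 0 < x) : log x - 1 / x ≤ digamma x := by
  linarith [log_le_digamma_add_one hx, digamma_add_one hx]

lemma digamma_le_log_sub_inv_two_mul {x : ℝ} (hx : 0 < x) : digamma x ≤ log x - 1 / (2 * x) := by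
  set F : ℝ → ℝ := fun y ↦ log y - 1 / (2 * y) - digamma y
  have hpos (n : ℕ) : 0 < x + n := by positivity
  have hanti : Antitone fun n : ℕ ↦ F (x + n) := by
    refine antitone_nat_of_succ_le fun n ↦ ?_
    have hlog := log_add_one_sub_log_le (hpos n)
    have hrec := digamma_add_one (hpos n)
    have hhalf : 1 / (2 * (x + n)) + 1 / (2 * (x + n)) = 1 / (x + n) := by field_simp; ring
    simp only [F, Nat.cast_succ, ← add_assoc]
    linarith
  have hbound (n : ℕ) : -(1 / (2 * (x + n))) ≤ F (x + n) := by
    simp only [F]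
    linarith [digamma_le_log (hpos n)]
  have hlim : Tendsto (fun n : ℕ ↦ -(1 / (2 * (x + n)))) atTop (nhds 0) := by
    rw [← neg_zero]
    exact (tendsto_const_nhds.div_atTop <| (tendsto_atTop_add_const_left _ x
      tendsto_natCast_atTop_atTop).const_mul_atTop two_pos).neg
  have hF : 0 ≤ F x := by
    refine le_of_tendsto hlim (Eventually.of_forall fun n ↦ (hbound n).trans ?_)
    simpa using hanti (Nat.zero_le n)
  simp only [F] at hF
  linarith

end Real

theorem digamma_log_bounds (x : ℝ) (hx : 0 < x) :
    log x - 1 / x ≤ digamma x ∧ digamma x ≤ log x - 1 / (2 * x) :=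
  ⟨log_sub_inv_le_digamma hx, digamma_le_log_sub_inv_two_mul hx⟩
end
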